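/- Let U₀ = {G_u·α : α ∈ [-1,1]^m} ⊆ ℝ^n be a zonotope centered at the origin, A ∈ ℝ^{n×n}, t ≥ 0, Δt > 0, and let η ≥ 1 be an integer. Set Ã_i = A^i·Δt^{i+1}/(i+1)! for i ≥ 0, D(Δt) = { Δt·M·u : M ∈ ℝ^{n×n} with |M| ≤ E(Δt,η) entrywise, u ∈ U₀ }, and P̂(Δt) = Ã_0·U₀ ⊕ Ã_1·U₀ ⊕ … ⊕ Ã_η·U₀ ⊕ D(Δt). Assume P_U(Δt) ⊆ P̂(Δt). Then d_H( e^{A·t}·P_U(Δt), e^{A·t}·P̂(Δt) ) ≤ err( e^{A·t}·( (Σ_{i=1}^{η} Ã_i)·U₀ ⊕ D(Δt) ) ) + err( e^{A·t}·( Ã_1·U₀ ⊕ … ⊕ Ã_η·U₀ ⊕ D(Δt) ) ). -/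

import Mathlib

open scoped Pointwise

/-- Matrix exponential. -/
noncomputable def mexp {n : ℕ} (A : Matrix (Fin n) (Fin n) ℝ) : Matrix (Fin n) (Fin n) ℝ :=
  NormedSpace.exp A

/-- Matrix-vector multiplication on Euclidean space. -/
noncomputable def mvE {m n : ℕ} (M : Matrix (Fin m) (Fin n) ℝ)
    (x : EuclideanSpace ℝ (Fin n)) : EuclideanSpace ℝ (Fin m) :=
  Matrix.toEuclideanLin M x

/-- Image of a set under a matrix: M·S = {M·s : s ∈ S}. -/
noncomputable def imgM {m n : ℕ} (M : Matrix (Fin m) (Fin n) ℝ)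
    (S : Set (EuclideanSpace ℝ (Fin n))) : Set (EuclideanSpace ℝ (Fin m)) :=
  mvE M '' S

/-- Zonotope with center `c` and generator matrix `G`. -/
noncomputable def zono {n p : ℕ} (c : EuclideanSpace ℝ (Fin n))
    (G : Matrix (Fin n) (Fin p) ℝ) : Set (EuclideanSpace ℝ (Fin n)) :=
  {x | ∃ α : EuclideanSpace ℝ (Fin p), (∀ i, α i ∈ Set.Icc (-1 : ℝ) 1) ∧ x = c + mvE G α}

/-- Linear combination of two sets. -/
def linComb {n : ℕ} (S1 S2 : Set (EuclideanSpace ℝ (Fin n))) :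
    Set (EuclideanSpace ℝ (Fin n)) :=
  {x | ∃ s1 ∈ S1, ∃ s2 ∈ S2, ∃ lam ∈ Set.Icc (0 : ℝ) 1, x = lam • s1 + (1 - lam) • s2}

/-- Tightest axis-aligned interval enclosure of a set. -/
noncomputable def box {n : ℕ} (S : Set (EuclideanSpace ℝ (Fin n))) :
    Set (EuclideanSpace ℝ (Fin n)) :=
  {x | ∀ i, x i ∈ Set.Icc (sInf ((fun y => y i) '' S)) (sSup ((fun y => y i) '' S))}

/-- Radius of the smallest origin-centered enclosing hypersphere. -/
noncomputable def rad {n : ℕ} (S : Set (EuclideanSpace ℝ (Fin n))) : ℝ :=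
  sSup ((fun x => ‖x‖) '' S)

/-- err(S) = rad(box(S)). -/
noncomputable def err {n : ℕ} (S : Set (EuclideanSpace ℝ (Fin n))) : ℝ := rad (box S)

/-- Spectral norm (operator 2-norm) of a matrix. -/
noncomputable def specNorm {m n : ℕ} (M : Matrix (Fin m) (Fin n) ℝ) : ℝ :=
  ‖LinearMap.toContinuousLinearMap (Matrix.toEuclideanLin M)‖

/-- Particular solution set P_U(t). -/
noncomputable def PU {n : ℕ} (U0 : Set (EuclideanSpace ℝ (Fin n)))
    (A : Matrix (Fin n) (Fin n) ℝ) (t : ℝ) : Set (EuclideanSpace ℝ (Fin n)) :=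
  {x | ∃ u : ℝ → EuclideanSpace ℝ (Fin n), Measurable u ∧ (∀ θ ∈ Set.Icc 0 t, u θ ∈ U0) ∧
    x = ∫ θ in (0 : ℝ)..t, mvE (mexp ((t - θ) • A)) (u θ)}

/-- Entrywise integral ∫₀^t e^{A·σ} dσ of the matrix exponential. -/
noncomputable def intExp {n : ℕ} (A : Matrix (Fin n) (Fin n) ℝ) (t : ℝ) :
    Matrix (Fin n) (Fin n) ℝ :=
  Matrix.of fun i j => ∫ σ in (0 : ℝ)..t, mexp (σ • A) i j

/-- Entrywise absolute value of a matrix. -/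
def entAbs {m n : ℕ} (M : Matrix (Fin m) (Fin n) ℝ) : Matrix (Fin m) (Fin n) ℝ :=
  Matrix.of fun i j => |M i j|

/-- Exponential remainder matrix E(Δt,η). -/
noncomputable def Eexp {n : ℕ} (A : Matrix (Fin n) (Fin n) ℝ) (dt : ℝ) (η : ℕ) :
    Matrix (Fin n) (Fin n) ℝ :=
  mexp (dt • entAbs A) -
    ∑ i ∈ Finset.range (η + 1), ((Nat.factorial i : ℝ)⁻¹) • (dt • entAbs A) ^ i

/-- Ã_i = A^i·Δt^{i+1}/(i+1)!. -/
noncomputable def Atilde {n : ℕ} (A : Matrix (Fin n) (Fin n) ℝ) (dt : ℝ) (i : ℕ) :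
    Matrix (Fin n) (Fin n) ℝ :=
  (dt ^ (i + 1) / (Nat.factorial (i + 1) : ℝ)) • A ^ i

/-- D(Δt) = {Δt·M·u : |M| ≤ E(Δt,η) entrywise, u ∈ U₀}. -/
noncomputable def Dset {n : ℕ} (A : Matrix (Fin n) (Fin n) ℝ) (dt : ℝ) (η : ℕ)
    (U0 : Set (EuclideanSpace ℝ (Fin n))) : Set (EuclideanSpace ℝ (Fin n)) :=
  {x | ∃ M : Matrix (Fin n) (Fin n) ℝ, (∀ i j, |M i j| ≤ Eexp A dt η i j) ∧
    ∃ u ∈ U0, x = dt • mvE M u}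

/-- P̂(Δt) = Ã_0·U₀ ⊕ … ⊕ Ã_η·U₀ ⊕ D(Δt). -/
noncomputable def PhatSet {n : ℕ} (A : Matrix (Fin n) (Fin n) ℝ) (dt : ℝ) (η : ℕ)
    (U0 : Set (EuclideanSpace ℝ (Fin n))) : Set (EuclideanSpace ℝ (Fin n)) :=
  (∑ i ∈ Finset.range (η + 1), imgM (Atilde A dt i) U0) + Dset A dt η U0

/-- One-step accumulating error bound ε̂(Δt). -/
noncomputable def ehatStep {n : ℕ} (A : Matrix (Fin n) (Fin n) ℝ) (t : ℝ) (η : ℕ)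
    (U0 : Set (EuclideanSpace ℝ (Fin n))) (dt : ℝ) : ℝ :=
  err (imgM (mexp (t • A)) (imgM (∑ i ∈ Finset.Icc 1 η, Atilde A dt i) U0 + Dset A dt η U0)) +
  err (imgM (mexp (t • A)) ((∑ i ∈ Finset.Icc 1 η, imgM (Atilde A dt i) U0) + Dset A dt η U0))

/-- Scalar interval I_i(Δt). -/
noncomputable def Iint (i : ℕ) (dt : ℝ) : Set ℝ :=
  Set.Icc (((i : ℝ) ^ (-(i : ℝ) / ((i : ℝ) - 1)) - (i : ℝ) ^ (-(1 : ℝ) / ((i : ℝ) - 1))) * dt ^ i) 0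

/-- Interval matrix F_x(Δt). -/
noncomputable def Fx {n : ℕ} (A : Matrix (Fin n) (Fin n) ℝ) (η : ℕ) (dt : ℝ) :
    Set (Matrix (Fin n) (Fin n) ℝ) :=
  {M | ∃ τ : ℕ → ℝ, (∀ i ∈ Finset.Icc 2 η, τ i ∈ Iint i dt) ∧
    ∃ R : Matrix (Fin n) (Fin n) ℝ, (∀ i j, |R i j| ≤ Eexp A dt η i j) ∧
    M = (∑ i ∈ Finset.Icc 2 η, (τ i / (Nat.factorial i : ℝ)) • A ^ i) + R}

/-- Interval matrix F_u(Δt). -/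
noncomputable def Fu {n : ℕ} (A : Matrix (Fin n) (Fin n) ℝ) (η : ℕ) (dt : ℝ) :
    Set (Matrix (Fin n) (Fin n) ℝ) :=
  {N | ∃ τ : ℕ → ℝ, (∀ i ∈ Finset.Icc 2 (η + 1), τ i ∈ Iint i dt) ∧
    ∃ R : Matrix (Fin n) (Fin n) ℝ, (∀ i j, |R i j| ≤ Eexp A dt η i j) ∧
    N = (∑ i ∈ Finset.Icc 2 (η + 1), (τ i / (Nat.factorial i : ℝ)) • A ^ (i - 1)) + dt • R}

/-- Curvature enclosure set C(Δt). -/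
noncomputable def Cset {n p : ℕ} (A : Matrix (Fin n) (Fin n) ℝ) (η : ℕ) (dt : ℝ)
    (ch : EuclideanSpace ℝ (Fin n)) (Gh : Matrix (Fin n) (Fin p) ℝ)
    (utld : EuclideanSpace ℝ (Fin n)) : Set (EuclideanSpace ℝ (Fin n)) :=
  {y | ∃ M ∈ Fx A η dt, ∃ N ∈ Fu A η dt, ∃ x ∈ zono ch Gh, y = mvE M x + mvE N utld}

/-- ε_hom(Δt). -/
noncomputable def ehom {n p : ℕ} (A : Matrix (Fin n) (Fin n) ℝ) (η : ℕ)
    (ch : EuclideanSpace ℝ (Fin n)) (Gh : Matrix (Fin n) (Fin p) ℝ)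
    (utld : EuclideanSpace ℝ (Fin n)) (dt : ℝ) : ℝ :=
  2 * err (Cset A η dt ch Gh utld) + Real.sqrt p * specNorm ((mexp (dt • A) - 1) * Gh)

/-- ε_U(Δt) = err(e^{A·t}·P̂(Δt)). -/
noncomputable def errPhat {n : ℕ} (A : Matrix (Fin n) (Fin n) ℝ) (t : ℝ) (η : ℕ)
    (U0 : Set (EuclideanSpace ℝ (Fin n))) (dt : ℝ) : ℝ :=
  err (imgM (mexp (t • A)) (PhatSet A dt η U0))

/-!
Since `P_U(Δt) ⊆ P̂(Δt)`, only the distance from points of `e^{At}·P̂(Δt)` to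
`e^{At}·P_U(Δt)` has to be bounded. A point `Ã₀u₀ + q` of `P̂(Δt)` is matched with the response
`∫₀^Δt e^{A(Δt-θ)} u₀ dθ` to the constant input `u₀`. Integrating the exponential series termwise,
this response is `Ã₀u₀ + p` with `p = (Σ_{i=1}^η Ã_i)u₀ + Δt·M·u₀` and `|M| ≤ E(Δt,η)` entrywise,
so the two points differ by `e^{At}(p - q)`, where `e^{At}p` and `e^{At}q` lie in the two sets whose
`err` make up the bound; a bounded set lies in its box, whence `‖e^{At}p‖ + ‖e^{At}q‖` is at most
that bound.
-/

section MatrixVector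

variable {m n : ℕ}

lemma add_mvE (M N : Matrix (Fin m) (Fin n) ℝ) (x : EuclideanSpace ℝ (Fin n)) :
    mvE (M + N) x = mvE M x + mvE N x := by
  simp [mvE]

lemma sub_mvE (M N : Matrix (Fin m) (Fin n) ℝ) (x : EuclideanSpace ℝ (Fin n)) :
    mvE (M - N) x = mvE M x - mvE N x := by
  simp [mvE]

lemma smul_mvE (c : ℝ) (M : Matrix (Fin m) (Fin n) ℝ) (x : EuclideanSpace ℝ (Fin n)) :
    mvE (c • M) x = c • mvE M x := by
  simp [mvE]

lemma mvE_sub (M : Matrix (Fin m) (Fin n) ℝ) (x y : EuclideanSpace ℝ (Fin n)) :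
    mvE M (x - y) = mvE M x - mvE M y := by
  simp [mvE]

lemma mvE_eq_sum_smul_single (M : Matrix (Fin m) (Fin n) ℝ) (x : EuclideanSpace ℝ (Fin n)) :
    mvE M x = ∑ i, ∑ j, M i j • x j • EuclideanSpace.single i (1 : ℝ) := by
  ext k
  simp [mvE, Matrix.mulVec, dotProduct, Pi.single_apply]

lemma norm_mvE_le (M : Matrix (Fin m) (Fin n) ℝ) (x : EuclideanSpace ℝ (Fin n)) :
    ‖mvE M x‖ ≤ (∑ i, ∑ j, |M i j|) * ‖x‖ := by
  rw [mvE_eq_sum_smul_single, Finset.sum_mul]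
  refine (norm_sum_le _ _).trans (Finset.sum_le_sum fun i _ => ?_)
  rw [Finset.sum_mul]
  refine (norm_sum_le _ _).trans (Finset.sum_le_sum fun j _ => ?_)
  rw [norm_smul, norm_smul, PiLp.norm_single, norm_one, mul_one, Real.norm_eq_abs]
  exact mul_le_mul_of_nonneg_left (PiLp.norm_apply_le x j) (abs_nonneg _)

end MatrixVector

section Bounded

open Bornology

variable {n : ℕ}

lemma isBounded_setOf_forall_mem_Icc {ι : Type*} [Fintype ι] (a b : ι → ℝ) :
    IsBounded {x : EuclideanSpace ℝ ι | ∀ i, x i ∈ Set.Icc (a i) (b i)} := by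
  refine ((EuclideanSpace.equiv ι ℝ).symm.lipschitz.isBounded_image
    (Metric.isBounded_Icc a b)).subset fun x hx => ⟨EuclideanSpace.equiv ι ℝ x, ?_, by simp⟩
  exact ⟨fun i => (hx i).1, fun i => (hx i).2⟩

lemma isBounded_imgM {m : ℕ} (M : Matrix (Fin m) (Fin n) ℝ)
    {S : Set (EuclideanSpace ℝ (Fin n))} (hS : IsBounded S) : IsBounded (imgM M S) :=
  (LinearMap.toContinuousLinearMap (Matrix.toEuclideanLin M)).lipschitz.isBounded_image hS

lemma isBounded_zono {p : ℕ} (c : EuclideanSpace ℝ (Fin n)) (G : Matrix (Fin n) (Fin p) ℝ) :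
    IsBounded (zono c G) := by
  refine ((isBounded_imgM G (isBounded_setOf_forall_mem_Icc (fun _ => -1) (fun _ => 1))).vadd
    c).subset ?_
  rintro _ ⟨α, hα, rfl⟩
  exact ⟨mvE G α, ⟨α, hα, rfl⟩, rfl⟩

lemma isBounded_finsetSum {ι : Type*} (s : Finset ι) (f : ι → Set (EuclideanSpace ℝ (Fin n)))
    (hf : ∀ i ∈ s, IsBounded (f i)) : IsBounded (∑ i ∈ s, f i) :=
  Finset.sum_induction f IsBounded (fun _ _ => isBounded_add)
    (by rw [← Set.singleton_zero]; exact isBounded_singleton) hf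

lemma isBounded_Dset (A : Matrix (Fin n) (Fin n) ℝ) (dt : ℝ) (η : ℕ)
    {U0 : Set (EuclideanSpace ℝ (Fin n))} (hU : IsBounded U0) : IsBounded (Dset A dt η U0) := by
  obtain ⟨R, hR⟩ := hU.exists_norm_le
  refine isBounded_iff_forall_norm_le.2 ⟨|dt| * ((∑ i, ∑ j, Eexp A dt η i j) * R), ?_⟩
  rintro _ ⟨M, hM, u, hu, rfl⟩
  have hME : ∑ i, ∑ j, |M i j| ≤ ∑ i, ∑ j, Eexp A dt η i j :=
    Finset.sum_le_sum fun i _ => Finset.sum_le_sum fun j _ => hM i j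
  rw [norm_smul, Real.norm_eq_abs]
  refine mul_le_mul_of_nonneg_left ((norm_mvE_le M u).trans ?_) (abs_nonneg dt)
  exact mul_le_mul hME (hR u hu) (norm_nonneg u) ((by positivity : (0:ℝ) ≤ _).trans hME)

lemma isBounded_box (S : Set (EuclideanSpace ℝ (Fin n))) : IsBounded (box S) :=
  isBounded_setOf_forall_mem_Icc _ _

lemma mem_box_of_mem {S : Set (EuclideanSpace ℝ (Fin n))} (hS : IsBounded S)
    {s : EuclideanSpace ℝ (Fin n)} (hs : s ∈ S) : s ∈ box S := by
  obtain ⟨R, hR⟩ := hS.exists_norm_le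
  have hcoord : ∀ i, ∀ x ∈ S, |x i| ≤ R := fun i x hx =>
    (PiLp.norm_apply_le x i).trans (hR x hx)
  intro i
  exact ⟨csInf_le ⟨-R, by rintro _ ⟨x, hx, rfl⟩; exact (abs_le.1 (hcoord i x hx)).1⟩ ⟨s, hs, rfl⟩,
    le_csSup ⟨R, by rintro _ ⟨x, hx, rfl⟩; exact (abs_le.1 (hcoord i x hx)).2⟩ ⟨s, hs, rfl⟩⟩

lemma norm_le_err {S : Set (EuclideanSpace ℝ (Fin n))} (hS : IsBounded S)
    {s : EuclideanSpace ℝ (Fin n)} (hs : s ∈ S) : ‖s‖ ≤ err S := by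
  obtain ⟨R, hR⟩ := (isBounded_box S).exists_norm_le
  exact le_csSup ⟨R, by rintro _ ⟨x, hx, rfl⟩; exact hR x hx⟩ ⟨s, mem_box_of_mem hS hs, rfl⟩

lemma err_nonneg (S : Set (EuclideanSpace ℝ (Fin n))) : 0 ≤ err S :=
  Real.sSup_nonneg (by rintro _ ⟨x, _, rfl⟩; exact norm_nonneg x)

end Bounded

section ExponentialSeries

open Nat

variable {n : ℕ}

lemma hasSum_mexp_apply (B : Matrix (Fin n) (Fin n) ℝ) (i j : Fin n) :
    HasSum (fun k => (B ^ k) i j / k !) (mexp B i j) := by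
  have hB : mexp B = ∑' k, (k ! : ℝ)⁻¹ • B ^ k := by rw [mexp, NormedSpace.exp_eq_tsum ℝ]
  have hs : Summable fun k => (k ! : ℝ)⁻¹ • B ^ k := by
    open scoped Matrix.Norms.Operator in exact NormedSpace.expSeries_summable' B
  rw [hB]
  simpa [div_eq_inv_mul] using Pi.hasSum.1 (Pi.hasSum.1 hs.hasSum i) j

lemma hasSum_Eexp_apply (A : Matrix (Fin n) (Fin n) ℝ) (dt : ℝ) (η : ℕ) (i j : Fin n) :
    HasSum (fun k => ((dt • entAbs A) ^ (k + (η + 1))) i j / (k + (η + 1))!)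
      (Eexp A dt η i j) := by
  have h := (hasSum_nat_add_iff' (η + 1)).2 (hasSum_mexp_apply (dt • entAbs A) i j)
  simpa [Eexp, Matrix.sum_apply, div_eq_inv_mul] using h

lemma abs_pow_apply_le (A : Matrix (Fin n) (Fin n) ℝ) (k : ℕ) (i j : Fin n) :
    |(A ^ k) i j| ≤ (entAbs A ^ k) i j := by
  induction k generalizing j with
  | zero => by_cases h : i = j <;> simp [h]
  | succ k ih =>
    rw [pow_succ, pow_succ, Matrix.mul_apply, Matrix.mul_apply]
    refine (Finset.abs_sum_le_sum_abs _ _).trans (Finset.sum_le_sum fun l _ => ?_)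
    rw [abs_mul]
    exact mul_le_mul_of_nonneg_right (ih l) (abs_nonneg _)

lemma abs_pow_apply_mul_pow_le (A : Matrix (Fin n) (Fin n) ℝ) {T : ℝ} (hT : 0 ≤ T) (k : ℕ)
    (i j : Fin n) : |(A ^ k) i j| * T ^ k ≤ ((T • entAbs A) ^ k) i j := by
  rw [smul_pow, Matrix.smul_apply, smul_eq_mul, mul_comm]
  exact mul_le_mul_of_nonneg_left (abs_pow_apply_le A k i j) (pow_nonneg hT k)

end ExponentialSeries

section Integral

open Nat

lemma integral_mul_pow_div_factorial (c T : ℝ) (k : ℕ) :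
    ∫ σ in (0 : ℝ)..T, c * σ ^ k / k ! = c * T ^ (k + 1) / (k + 1)! := by
  simp only [mul_div_assoc, intervalIntegral.integral_const_mul, intervalIntegral.integral_div,
    integral_pow, factorial_succ]
  push_cast
  field_simp
  ring

lemma hasSum_integral_mul_pow_div_factorial {a : ℕ → ℝ} {T : ℝ} (hT : 0 ≤ T)
    (ha : Summable fun k => |a k| * T ^ k / k !) :
    HasSum (fun k => a k * T ^ (k + 1) / (k + 1)!)
      (∫ σ in (0 : ℝ)..T, ∑' k, a k * σ ^ k / k !) := by
  have hbound : ∀ k, ∀ σ ∈ Set.uIoc 0 T, ‖a k * σ ^ k / (k ! : ℝ)‖ ≤ |a k| * T ^ k / k ! := by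
    intro k σ hσ
    rw [Set.uIoc_of_le hT] at hσ
    rw [Real.norm_eq_abs, abs_div, abs_mul, abs_pow, abs_of_pos hσ.1, Nat.abs_cast]
    gcongr
    exacts [hσ.1.le, hσ.2]
  simp_rw [← integral_mul_pow_div_factorial]
  exact intervalIntegral.hasSum_integral_of_dominated_convergence _
    (fun k => (by fun_prop : Continuous fun σ : ℝ => a k * σ ^ k / k !).aestronglyMeasurable)
    (fun k => MeasureTheory.ae_of_all _ (hbound k))
    (MeasureTheory.ae_of_all _ fun _ _ => ha) intervalIntegrable_const
    (MeasureTheory.ae_of_all _ fun σ hσ => (ha.of_norm_bounded (hbound · σ hσ)).hasSum)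

variable {n : ℕ}

lemma hasSum_intExp_apply (A : Matrix (Fin n) (Fin n) ℝ) {T : ℝ} (hT : 0 ≤ T) (i j : Fin n) :
    HasSum (fun k => Atilde A T k i j) (intExp A T i j) := by
  have hexp : ∀ σ : ℝ, mexp (σ • A) i j = ∑' k, (A ^ k) i j * σ ^ k / k ! := fun σ => by
    simp only [(hasSum_mexp_apply (σ • A) i j).tsum_eq.symm, smul_pow, Matrix.smul_apply,
      smul_eq_mul, mul_comm]
  have hsum : Summable fun k => |(A ^ k) i j| * T ^ k / k ! :=
    (hasSum_mexp_apply (T • entAbs A) i j).summable.of_nonneg_of_le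
      (fun k => by positivity) fun k => by gcongr; exact abs_pow_apply_mul_pow_le A hT k i j
  have h := hasSum_integral_mul_pow_div_factorial hT hsum
  simp only [← hexp] at h
  convert h using 1
  · funext k
    simp only [Atilde, Matrix.smul_apply, smul_eq_mul]
    ring
  · rfl

end Integral

section Remainder

open Nat

variable {n : ℕ}

lemma abs_Atilde_apply_le (A : Matrix (Fin n) (Fin n) ℝ) {T : ℝ} (hT : 0 ≤ T) (k : ℕ)
    (i j : Fin n) : |Atilde A T k i j| ≤ T * (((T • entAbs A) ^ k) i j / k !) := by
  have hfact : (k ! : ℝ) ≤ (k + 1)! := by exact_mod_cast factorial_le k.le_succ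
  calc |Atilde A T k i j| = T * (|(A ^ k) i j| * T ^ k / (k + 1)!) := by
        simp only [Atilde, Matrix.smul_apply, smul_eq_mul, abs_mul, abs_div, abs_pow,
          abs_of_nonneg hT, Nat.abs_cast]
        ring
    _ ≤ T * (((T • entAbs A) ^ k) i j / k !) := by
        have hpow := abs_pow_apply_mul_pow_le A hT k i j
        have hpow0 : 0 ≤ ((T • entAbs A) ^ k) i j := (by positivity : (0 : ℝ) ≤ _).trans hpow
        exact mul_le_mul_of_nonneg_left (div_le_div₀ hpow0 hpow (by positivity) hfact) hT

lemma abs_intExp_sub_sum_Atilde_apply_le (A : Matrix (Fin n) (Fin n) ℝ) {T : ℝ} (hT : 0 ≤ T)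
    (η : ℕ) (i j : Fin n) :
    |(intExp A T - ∑ k ∈ Finset.range (η + 1), Atilde A T k) i j| ≤ T * Eexp A T η i j := by
  have htail := (hasSum_nat_add_iff' (η + 1)).2 (hasSum_intExp_apply A hT i j)
  rw [Matrix.sub_apply, Matrix.sum_apply]
  exact htail.norm_le_of_bounded ((hasSum_Eexp_apply A T η i j).mul_left T)
    fun k => abs_Atilde_apply_le A hT _ i j

lemma mvE_intExp_sub_sum_Atilde_mem_Dset (A : Matrix (Fin n) (Fin n) ℝ) {dt : ℝ} (hdt : 0 < dt)
    (η : ℕ) {U0 : Set (EuclideanSpace ℝ (Fin n))} {u : EuclideanSpace ℝ (Fin n)} (hu : u ∈ U0) :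
    mvE (intExp A dt - ∑ k ∈ Finset.range (η + 1), Atilde A dt k) u ∈ Dset A dt η U0 := by
  set R := intExp A dt - ∑ k ∈ Finset.range (η + 1), Atilde A dt k
  refine ⟨dt⁻¹ • R, fun i j => ?_, u, hu, ?_⟩
  · rw [Matrix.smul_apply, smul_eq_mul, abs_mul, abs_inv, abs_of_pos hdt, inv_mul_le_iff₀ hdt]
    exact abs_intExp_sub_sum_Atilde_apply_le A hdt.le η i j
  · rw [smul_mvE, smul_smul, mul_inv_cancel₀ hdt.ne', one_smul]

lemma continuous_mexp_smul_apply (A : Matrix (Fin n) (Fin n) ℝ) (i j : Fin n) :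
    Continuous fun σ : ℝ => mexp (σ • A) i j := by
  open scoped Matrix.Norms.Operator in
  exact (NormedSpace.exp_continuous.comp (continuous_id.smul continuous_const)).matrix_elem i j

lemma integral_mvE_mexp (A : Matrix (Fin n) (Fin n) ℝ) (T : ℝ) (u : EuclideanSpace ℝ (Fin n)) :
    ∫ θ in (0 : ℝ)..T, mvE (mexp ((T - θ) • A)) u = mvE (intExp A T) u := by
  have hcont : ∀ i j, Continuous fun σ : ℝ => mexp (σ • A) i j • u j •
      EuclideanSpace.single i (1 : ℝ) := fun i j =>
    (continuous_mexp_smul_apply A i j).smul continuous_const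
  rw [intervalIntegral.integral_comp_sub_left (fun σ => mvE (mexp (σ • A)) u), sub_self,
    sub_zero]
  simp only [mvE_eq_sum_smul_single]
  rw [intervalIntegral.integral_finsetSum fun i _ =>
    (continuous_finsetSum _ fun j _ => hcont i j).intervalIntegrable _ _]
  refine Finset.sum_congr rfl fun i _ => ?_
  rw [intervalIntegral.integral_finsetSum fun j _ => (hcont i j).intervalIntegrable _ _]
  simp only [intervalIntegral.integral_smul_const, intExp, Matrix.of_apply]

end Remainder

lemma sum_range_succ_eq_add_sum_Icc {M : Type*} [AddCommMonoid M] (f : ℕ → M) (η : ℕ) :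
    ∑ i ∈ Finset.range (η + 1), f i = f 0 + ∑ i ∈ Finset.Icc 1 η, f i := by
  rw [Finset.range_eq_Ico, Finset.sum_eq_sum_Ico_succ_bot η.succ_pos]
  rfl

lemma exists_mem_PU_sub_eq_sub {n : ℕ} (A : Matrix (Fin n) (Fin n) ℝ) {dt : ℝ} (hdt : 0 < dt)
    (η : ℕ) {U0 : Set (EuclideanSpace ℝ (Fin n))} {y : EuclideanSpace ℝ (Fin n)}
    (hy : y ∈ PhatSet A dt η U0) :
    ∃ x ∈ PU U0 A dt,
      ∃ p ∈ imgM (∑ i ∈ Finset.Icc 1 η, Atilde A dt i) U0 + Dset A dt η U0,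
      ∃ q ∈ (∑ i ∈ Finset.Icc 1 η, imgM (Atilde A dt i) U0) + Dset A dt η U0,
      x - y = p - q := by
  rw [PhatSet, sum_range_succ_eq_add_sum_Icc, add_assoc] at hy
  obtain ⟨_, ⟨u, hu, rfl⟩, q, hq, rfl⟩ := Set.mem_add.1 hy
  refine ⟨∫ θ in (0 : ℝ)..dt, mvE (mexp ((dt - θ) • A)) u, ⟨fun _ => u, measurable_const,
      fun _ _ => hu, rfl⟩,
    mvE (∑ i ∈ Finset.Icc 1 η, Atilde A dt i) u +
      mvE (intExp A dt - ∑ k ∈ Finset.range (η + 1), Atilde A dt k) u,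
    Set.add_mem_add ⟨u, hu, rfl⟩ (mvE_intExp_sub_sum_Atilde_mem_Dset A hdt η hu), q, hq, ?_⟩
  rw [integral_mvE_mexp, sub_mvE, sum_range_succ_eq_add_sum_Icc, add_mvE]
  abel

theorem PU_one_step_error_general {n m : ℕ} (Gu : Matrix (Fin n) (Fin m) ℝ)
    (A : Matrix (Fin n) (Fin n) ℝ) (t : ℝ)
    (dt : ℝ) (hdt : 0 < dt) (η : ℕ)
    (hsub : PU (zono 0 Gu) A dt ⊆ PhatSet A dt η (zono 0 Gu)) :
    Metric.hausdorffDist (imgM (mexp (t • A)) (PU (zono 0 Gu) A dt))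
        (imgM (mexp (t • A)) (PhatSet A dt η (zono 0 Gu))) ≤
      ehatStep A t η (zono 0 Gu) dt := by
  set U0 := zono 0 Gu
  set P := mexp (t • A)
  have hU : Bornology.IsBounded U0 := isBounded_zono 0 Gu
  have hD := isBounded_Dset A dt η hU
  have herr : 0 ≤ ehatStep A t η U0 dt := add_nonneg (err_nonneg _) (err_nonneg _)
  refine Metric.hausdorffDist_le_of_mem_dist herr (fun x hx => ⟨x, Set.image_mono hsub hx,
    by rwa [dist_self]⟩) ?_
  rintro _ ⟨y, hy, rfl⟩
  obtain ⟨x, hx, p, hp, q, hq, hxy⟩ := exists_mem_PU_sub_eq_sub A hdt η hy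
  refine ⟨mvE P x, ⟨x, hx, rfl⟩, ?_⟩
  rw [dist_comm, dist_eq_norm, ← mvE_sub, hxy, mvE_sub]
  exact (norm_sub_le _ _).trans (add_le_add
    (norm_le_err (isBounded_imgM P (isBounded_add (isBounded_imgM _ hU) hD)) ⟨p, hp, rfl⟩)
    (norm_le_err (isBounded_imgM P (isBounded_add
      (isBounded_finsetSum _ _ fun i _ => isBounded_imgM _ hU) hD)) ⟨q, hq, rfl⟩))

/-- one-step error bound for the particular solution enclosure. -/
theorem PU_one_step_error {n m : ℕ} (Gu : Matrix (Fin n) (Fin m) ℝ)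
    (A : Matrix (Fin n) (Fin n) ℝ) (t : ℝ) (ht : 0 ≤ t)
    (dt : ℝ) (hdt : 0 < dt) (η : ℕ) (hη : 1 ≤ η)
    (hsub : PU (zono 0 Gu) A dt ⊆ PhatSet A dt η (zono 0 Gu)) :
    Metric.hausdorffDist (imgM (mexp (t • A)) (PU (zono 0 Gu) A dt))
        (imgM (mexp (t • A)) (PhatSet A dt η (zono 0 Gu))) ≤
      ehatStep A t η (zono 0 Gu) dt :=
  PU_one_step_error_general Gu A t dt hdt η hsub
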